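/- arXiv:2212.07248 — 3 statements merged into one kernel-verified Lean document; each statement's English description precedes it below -/
import Mathlib

section
/- Let A₁₁ ∈ ℝ^{k×k} and A₂₂ ∈ ℝ^{(n−k)×(n−k)} be symmetric with disjoint spectra. Then the Sylvester operator T: ℝ^{(n−k)×k} → ℝ^{(n−k)×k}, T(X) = X A₁₁ − A₂₂ X, is invertible, and the norm of its inverse induced by the Frobenius norm equals 1/s₀, where s₀ = min{|λ − ν| : λ ∈ σ(A₁₁), ν ∈ σ(A₂₂)}. -/
/-!
Diagonalize `A₁₁ = U D₁ Uᵀ` and `A₂₂ = V D₂ Vᵀ` with orthogonal `U`, `V`. In the coordinates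
`Y = Vᵀ X U` the Sylvester operator becomes entrywise multiplication by the eigenvalue gaps
`λⱼ - νᵢ`, so its inverse is entrywise division by them. The change of coordinates preserves the
Frobenius norm, hence the inverse has norm `1 / min |λⱼ - νᵢ| = 1 / s₀`, attained at the matrix
unit of a closest pair of eigenvalues.
-/

open Matrix

/-- The Frobenius norm of a real matrix. -/
noncomputable def frob {m n : Type*} [Fintype m] [Fintype n] (X : Matrix m n ℝ) : ℝ :=
  Real.sqrt (∑ i, ∑ j, X i j ^ 2)

section Frobenius

variable {m n : Type*} [Fintype m] [Fintype n]

attribute [local instance] Matrix.frobeniusNormedAddCommGroup in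
lemma frob_eq_norm (X : Matrix m n ℝ) : frob X = ‖X‖ := by
  simp [frob, frobenius_norm_def, Real.sqrt_eq_rpow]

attribute [local instance] Matrix.frobeniusNormedAddCommGroup in
lemma frob_pos {X : Matrix m n ℝ} (hX : X ≠ 0) : 0 < frob X :=
  frob_eq_norm X ▸ norm_pos_iff.mpr hX

lemma frob_eq_sqrt_trace (X : Matrix m n ℝ) : frob X = √(trace (X * Xᵀ)) := by
  simp only [frob, trace, diag, mul_apply, transpose_apply, sq]

lemma frob_unitary_mul_mul [DecidableEq m] [DecidableEq n] {U : Matrix m m ℝ} {V : Matrix n n ℝ}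
    (hU : U ∈ unitaryGroup m ℝ) (hV : V ∈ unitaryGroup n ℝ) (X : Matrix m n ℝ) :
    frob (U * X * V) = frob X := by
  have hUU : Uᵀ * U = 1 := Unitary.star_mul_self_of_mem hU
  have hVV : V * Vᵀ = 1 := Unitary.mul_star_self_of_mem hV
  rw [frob_eq_sqrt_trace, frob_eq_sqrt_trace, transpose_mul, transpose_mul,
    show U * X * V * (Vᵀ * (Xᵀ * Uᵀ)) = U * (X * Xᵀ) * Uᵀ by
      simp only [Matrix.mul_assoc, ← Matrix.mul_assoc V, hVV, Matrix.one_mul],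
    trace_mul_cycle, hUU, Matrix.one_mul]

lemma frob_hadamard_le {G : Matrix m n ℝ} {c : ℝ} (hc : 0 ≤ c) (hG : ∀ i j, |G i j| ≤ c)
    (X : Matrix m n ℝ) : frob (G ⊙ X) ≤ c * frob X := by
  rw [frob, frob, ← Real.sqrt_sq hc, ← Real.sqrt_mul (sq_nonneg c), Finset.mul_sum]
  refine Real.sqrt_le_sqrt (Finset.sum_le_sum fun i _ => ?_)
  rw [Finset.mul_sum]
  refine Finset.sum_le_sum fun j _ => ?_
  rw [hadamard_apply, mul_pow]
  exact mul_le_mul_of_nonneg_right (sq_le_sq.mpr ((hG i j).trans (le_abs_self c))) (sq_nonneg _)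

lemma frob_single [DecidableEq m] [DecidableEq n] (i : m) (j : n) (a : ℝ) :
    frob (single i j a) = |a| := by
  simp [frob, single_apply, ite_and, apply_ite (· ^ 2), Real.sqrt_sq_eq_abs]

lemma isGreatest_frob_div {p q : Type*} [Fintype p] [Fintype q]
    {S : Matrix m n ℝ → Matrix p q ℝ} {c : ℝ} (hle : ∀ X, frob (S X) ≤ c * frob X)
    {X₀ : Matrix m n ℝ} (hX₀ : X₀ ≠ 0) (hS : frob (S X₀) = c * frob X₀) :
    IsGreatest {r | ∃ X : Matrix m n ℝ, X ≠ 0 ∧ r = frob (S X) / frob X} c := by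
  refine ⟨⟨X₀, hX₀, by rw [hS, mul_div_cancel_right₀ _ (frob_pos hX₀).ne']⟩, ?_⟩
  rintro r ⟨X, hX, rfl⟩
  exact (div_le_iff₀ (frob_pos hX)).mpr (hle X)

end Frobenius

section Hadamard

variable {m n K : Type*} [Field K]

def hadamardLinearMap (G : Matrix m n K) : Matrix m n K →ₗ[K] Matrix m n K where
  toFun X := G ⊙ X
  map_add' X Y := hadamard_add G X Y
  map_smul' c X := hadamard_smul G X c

lemma map_inv_hadamard_hadamard {G : Matrix m n K} (hG : ∀ i j, G i j ≠ 0) (X : Matrix m n K) :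
    G.map (·⁻¹) ⊙ (G ⊙ X) = X := by
  ext i j
  simp [inv_mul_cancel_left₀ (hG i j)]

lemma hadamard_map_inv_hadamard {G : Matrix m n K} (hG : ∀ i j, G i j ≠ 0) (X : Matrix m n K) :
    G ⊙ (G.map (·⁻¹) ⊙ X) = X := by
  ext i j
  simp [mul_inv_cancel_left₀ (hG i j)]

lemma hadamard_single_one [DecidableEq m] [DecidableEq n] (G : Matrix m n K) (i : m) (j : n) :
    G ⊙ single i j 1 = single i j (G i j) := by
  ext i' j'
  by_cases h : i = i' ∧ j = j'
  · obtain ⟨rfl, rfl⟩ := h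
    simp
  · simp [h]

end Hadamard

section UnitaryConj

variable {m n R : Type*} [Fintype m] [Fintype n] [DecidableEq m] [DecidableEq n]
  [CommRing R] [StarRing R]

def unitaryConj (U : unitaryGroup n R) (V : unitaryGroup m R) :
    Matrix m n R ≃ₗ[R] Matrix m n R where
  toFun X := star (V : Matrix m m R) * X * (U : Matrix n n R)
  invFun Y := (V : Matrix m m R) * Y * star (U : Matrix n n R)
  map_add' X Y := by simp only [Matrix.mul_add, Matrix.add_mul]
  map_smul' c X := by simp only [Matrix.mul_smul, Matrix.smul_mul, RingHom.id_apply]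
  left_inv X := by
    simp only [Matrix.mul_assoc, Unitary.mul_star_self_of_mem U.2, Matrix.mul_one,
      ← Matrix.mul_assoc (V : Matrix m m R), Unitary.mul_star_self_of_mem V.2, Matrix.one_mul]
  right_inv Y := by
    simp only [Matrix.mul_assoc, Unitary.star_mul_self_of_mem U.2, Matrix.mul_one,
      ← Matrix.mul_assoc (star (V : Matrix m m R)), Unitary.star_mul_self_of_mem V.2,
      Matrix.one_mul]

lemma unitaryConj_apply (U : unitaryGroup n R) (V : unitaryGroup m R) (X : Matrix m n R) :
    unitaryConj U V X = star (V : Matrix m m R) * X * (U : Matrix n n R) := rfl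

lemma unitaryConj_sylvester_of_eq_diagonal (U : unitaryGroup n R) (V : unitaryGroup m R)
    {A : Matrix n n R} {B : Matrix m m R} {d : n → R} {e : m → R}
    (hA : A = (U : Matrix n n R) * diagonal d * star (U : Matrix n n R))
    (hB : B = (V : Matrix m m R) * diagonal e * star (V : Matrix m m R)) (X : Matrix m n R) :
    unitaryConj U V (X * A - B * X) = of (fun i j => d j - e i) ⊙ unitaryConj U V X := by
  have hXA : unitaryConj U V (X * A) = unitaryConj U V X * diagonal d := by
    simp only [hA, unitaryConj_apply, Matrix.mul_assoc, Unitary.star_mul_self_of_mem U.2,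
      Matrix.mul_one]
  have hBX : unitaryConj U V (B * X) = diagonal e * unitaryConj U V X := by
    simp only [hB, unitaryConj_apply, ← Matrix.mul_assoc, Unitary.star_mul_self_of_mem V.2,
      Matrix.one_mul]
  rw [map_sub, hXA, hBX]
  ext i j
  simp only [Matrix.sub_apply, mul_diagonal, diagonal_mul, hadamard_apply, of_apply]
  ring

lemma frob_unitaryConj (U : unitaryGroup n ℝ) (V : unitaryGroup m ℝ) (X : Matrix m n ℝ) :
    frob (unitaryConj U V X) = frob X :=
  frob_unitary_mul_mul (Unitary.star_mem V.2) U.2 X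

lemma frob_unitaryConj_symm (U : unitaryGroup n ℝ) (V : unitaryGroup m ℝ) (Y : Matrix m n ℝ) :
    frob ((unitaryConj U V).symm Y) = frob Y :=
  frob_unitary_mul_mul V.2 (Unitary.star_mem U.2) Y

end UnitaryConj

section Sylvester

variable {m n : Type*} [Fintype m] [Fintype n] [DecidableEq m] [DecidableEq n]
  {A : Matrix n n ℝ} {B : Matrix m m ℝ} (hA : A.IsHermitian) (hB : B.IsHermitian)

noncomputable def eigenvalueGap : Matrix m n ℝ :=
  of fun i j => hA.eigenvalues j - hB.eigenvalues i

noncomputable def eigenbasisConj : Matrix m n ℝ ≃ₗ[ℝ] Matrix m n ℝ :=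
  unitaryConj hA.eigenvectorUnitary hB.eigenvectorUnitary

lemma eigenbasisConj_sylvester (X : Matrix m n ℝ) :
    eigenbasisConj hA hB (X * A - B * X) = eigenvalueGap hA hB ⊙ eigenbasisConj hA hB X := by
  have hA' := hA.spectral_theorem
  have hB' := hB.spectral_theorem
  simp only [Unitary.conjStarAlgAut_apply, RCLike.ofReal_real_eq_id, Function.id_comp] at hA' hB'
  exact unitaryConj_sylvester_of_eq_diagonal _ _ hA' hB' X

lemma eigenvalueGap_ne_zero (hdisj : Disjoint (spectrum ℝ A) (spectrum ℝ B)) (i : m) (j : n) :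
    eigenvalueGap hA hB i j ≠ 0 := fun h =>
  Set.disjoint_left.mp hdisj (hA.eigenvalues_mem_spectrum_real j)
    (sub_eq_zero.mp h ▸ hB.eigenvalues_mem_spectrum_real i)

lemma setOf_abs_sub_spectrum_eq_range :
    {r | ∃ lam ∈ spectrum ℝ A, ∃ ν ∈ spectrum ℝ B, r = |lam - ν|} =
      Set.range fun p : m × n => |eigenvalueGap hA hB p.1 p.2| := by
  ext r
  rw [hA.spectrum_real_eq_range_eigenvalues, hB.spectrum_real_eq_range_eigenvalues]
  constructor
  · rintro ⟨_, ⟨j, rfl⟩, _, ⟨i, rfl⟩, rfl⟩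
    exact ⟨(i, j), rfl⟩
  · rintro ⟨⟨i, j⟩, rfl⟩
    exact ⟨_, ⟨j, rfl⟩, _, ⟨i, rfl⟩, rfl⟩

noncomputable def sylvesterInv : Matrix m n ℝ →ₗ[ℝ] Matrix m n ℝ :=
  (eigenbasisConj hA hB).symm.toLinearMap ∘ₗ
    hadamardLinearMap ((eigenvalueGap hA hB).map (·⁻¹)) ∘ₗ (eigenbasisConj hA hB).toLinearMap

lemma sylvesterInv_apply (Y : Matrix m n ℝ) :
    sylvesterInv hA hB Y =
      (eigenbasisConj hA hB).symm ((eigenvalueGap hA hB).map (·⁻¹) ⊙ eigenbasisConj hA hB Y) :=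
  rfl

lemma sylvesterInv_sylvester (hgap : ∀ i j, eigenvalueGap hA hB i j ≠ 0) (X : Matrix m n ℝ) :
    sylvesterInv hA hB (X * A - B * X) = X := by
  rw [sylvesterInv_apply, eigenbasisConj_sylvester, map_inv_hadamard_hadamard hgap,
    LinearEquiv.symm_apply_apply]

lemma sylvester_sylvesterInv (hgap : ∀ i j, eigenvalueGap hA hB i j ≠ 0) (Y : Matrix m n ℝ) :
    sylvesterInv hA hB Y * A - B * sylvesterInv hA hB Y = Y := by
  apply (eigenbasisConj hA hB).injective
  rw [eigenbasisConj_sylvester, sylvesterInv_apply, LinearEquiv.apply_symm_apply,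
    hadamard_map_inv_hadamard hgap]

lemma frob_sylvesterInv_le {s : ℝ} (hs : 0 < s) (hgap : ∀ i j, s ≤ |eigenvalueGap hA hB i j|)
    (Y : Matrix m n ℝ) : frob (sylvesterInv hA hB Y) ≤ s⁻¹ * frob Y := by
  rw [sylvesterInv_apply, eigenbasisConj, frob_unitaryConj_symm, ← frob_unitaryConj _ _ Y]
  refine frob_hadamard_le (inv_nonneg.mpr hs.le) (fun i j => ?_) _
  rw [map_apply, abs_inv]
  exact inv_anti₀ hs (hgap i j)

lemma frob_sylvesterInv_eigenbasisConj_symm_single (i : m) (j : n) :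
    frob (sylvesterInv hA hB ((eigenbasisConj hA hB).symm (single i j 1))) =
      |eigenvalueGap hA hB i j|⁻¹ * frob ((eigenbasisConj hA hB).symm (single i j 1)) := by
  rw [sylvesterInv_apply, LinearEquiv.apply_symm_apply, hadamard_single_one, eigenbasisConj,
    frob_unitaryConj_symm, frob_unitaryConj_symm, frob_single, frob_single, map_apply, abs_inv,
    abs_one, mul_one]

end Sylvester

/-- If the symmetric matrices `A₁₁` and `A₂₂` have disjoint spectra, the Sylvester operator
`T(X) = X A₁₁ - A₂₂ X` is invertible and the norm of its inverse induced by the Frobenius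
norm equals `1/s₀`, where `s₀` is the minimal distance between the spectra. -/
theorem stmt8 (k l : ℕ)
    (A₁₁ : Matrix (Fin k) (Fin k) ℝ) (A₂₂ : Matrix (Fin l) (Fin l) ℝ)
    (h₁ : A₁₁.IsSymm) (h₂ : A₂₂.IsSymm)
    (hdisj : Disjoint (spectrum ℝ A₁₁) (spectrum ℝ A₂₂))
    (s₀ : ℝ)
    (hs₀ : IsLeast {r | ∃ lam ∈ spectrum ℝ A₁₁, ∃ ν ∈ spectrum ℝ A₂₂, r = |lam - ν|} s₀) :
    ∃ S : Matrix (Fin l) (Fin k) ℝ →ₗ[ℝ] Matrix (Fin l) (Fin k) ℝ,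
      (∀ X, S (X * A₁₁ - A₂₂ * X) = X) ∧
      (∀ X, (S X) * A₁₁ - A₂₂ * (S X) = X) ∧
      IsGreatest {c | ∃ X : Matrix (Fin l) (Fin k) ℝ, X ≠ 0 ∧ c = frob (S X) / frob X}
        (1 / s₀) := by
  have hA : A₁₁.IsHermitian := isHermitian_iff_isSymm.mpr h₁
  have hB : A₂₂.IsHermitian := isHermitian_iff_isSymm.mpr h₂
  rw [setOf_abs_sub_spectrum_eq_range hA hB] at hs₀
  obtain ⟨⟨i₀, j₀⟩, hattain : |eigenvalueGap hA hB i₀ j₀| = s₀⟩ := hs₀.1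
  have hgap_ne := eigenvalueGap_ne_zero hA hB hdisj
  have hpos : 0 < s₀ := hattain ▸ abs_pos.mpr (hgap_ne i₀ j₀)
  have hgap_le : ∀ i j, s₀ ≤ |eigenvalueGap hA hB i j| := fun i j => hs₀.2 ⟨(i, j), rfl⟩
  have hsingle : (eigenbasisConj hA hB).symm (single i₀ j₀ 1) ≠ 0 :=
    (LinearEquiv.map_ne_zero_iff _).mpr fun h => by simpa using congrFun (congrFun h i₀) j₀
  refine ⟨sylvesterInv hA hB, sylvesterInv_sylvester hA hB hgap_ne,
    sylvester_sylvesterInv hA hB hgap_ne, ?_⟩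
  rw [one_div]
  refine isGreatest_frob_div (frob_sylvesterInv_le hA hB hpos hgap_le) hsingle ?_
  rw [frob_sylvesterInv_eigenbasisConj_symm_single, hattain]
end

section
/- Let A₁₁ ∈ ℝ^{k×k} and A₂₂ ∈ ℝ^{(n−k)×(n−k)} be symmetric, and let A₁₁(μ), A₂₂(μ) and A₁₁^{(k)}, A₂₂^{(k)} be such that A(μ) has disjoint block spectra. Then the eigenvalues of the composed self-adjoint operator X ↦ T^{(k)}(T(μ)⁻¹(X)), where T^{(k)}(X) = X A₁₁^{(k)} − A₂₂^{(k)} X and T(μ)(X) = X A₁₁(μ) − A₂₂(μ) X, are given by (λ_i^{(k)} − λ_j^{(k)}) / ⟨Λ_i − Λ_j, μ⟩ over pairs of eigenvalue vectors Λ_i of the first block and Λ_j of the second block, provided the two families {A₁₁^{(k)}}_k and {A₂₂^{(k)}}_k are each commuting families that are simultaneously diagonalized together with A₁₁(μ) and A₂₂(μ) respectively. -/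
/-!
In the orthonormal bases diagonalizing the two families, the matrices `V Eⱼᵢ Uᵀ` (with `Eⱼᵢ` the
matrix units) form a basis of common eigenvectors: right multiplication by `A₁ p` scales
`V Eⱼᵢ Uᵀ` by `Λ i p` and left multiplication by `A₂ p` by `Λ' j p`. Hence `T(μ)` scales it by
`⟨Λ i - Λ' j, μ⟩`, its inverse by the reciprocal, and `T⁽ᵏ⁾ ∘ T(μ)⁻¹` by the claimed quotient.
An operator with a basis of eigenvectors has exactly their eigenvalues as spectrum.
-/

open Matrix

namespace Matrix

theorem single_mul_diagonal {R m n : Type*} [CommSemiring R] [Fintype m] [DecidableEq m]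
    [DecidableEq n] (i : n) (j : m) (c : R) (f : m → R) :
    single i j c * diagonal f = f j • single i j c := by
  ext a b
  rw [mul_diagonal, smul_apply, single_apply]
  split_ifs with h
  · rw [h.2, smul_eq_mul, mul_comm]
  · simp

theorem diagonal_mul_single {R m n : Type*} [CommSemiring R] [Fintype n] [DecidableEq m]
    [DecidableEq n] (i : n) (j : m) (c : R) (f : n → R) :
    diagonal f * single i j c = f i • single i j c := by
  ext a b
  rw [diagonal_mul, smul_apply, single_apply]
  split_ifs with h
  · rw [h.1, smul_eq_mul]
  · simp

section OrthogonalConj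

variable {R m n : Type*} [CommSemiring R] [Fintype m] [Fintype n] [DecidableEq m] [DecidableEq n]
  {U : Matrix m m R} {V : Matrix n n R}

def orthogonalConj (hU : Uᵀ * U = 1) (hV : Vᵀ * V = 1) : Matrix n m R ≃ₗ[R] Matrix n m R where
  toFun X := V * X * Uᵀ
  invFun X := Vᵀ * X * U
  map_add' X Y := by rw [Matrix.mul_add, Matrix.add_mul]
  map_smul' c X := by rw [Matrix.mul_smul, Matrix.smul_mul, RingHom.id_apply]
  left_inv X := by
    simp only [Matrix.mul_assoc, hU, Matrix.mul_one, ← Matrix.mul_assoc Vᵀ V, hV, Matrix.one_mul]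
  right_inv X := by
    simp only [Matrix.mul_assoc, mul_eq_one_comm.mp hU, Matrix.mul_one,
      ← Matrix.mul_assoc V Vᵀ, mul_eq_one_comm.mp hV, Matrix.one_mul]

theorem orthogonalConj_apply (hU : Uᵀ * U = 1) (hV : Vᵀ * V = 1) (X : Matrix n m R) :
    orthogonalConj hU hV X = V * X * Uᵀ := rfl

noncomputable def orthogonalConjBasis (hU : Uᵀ * U = 1) (hV : Vᵀ * V = 1) :
    Module.Basis (n × m) R (Matrix n m R) :=
  (stdBasis R n m).map (orthogonalConj hU hV)

theorem orthogonalConjBasis_apply (hU : Uᵀ * U = 1) (hV : Vᵀ * V = 1) (q : n × m) :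
    orthogonalConjBasis hU hV q = V * single q.1 q.2 (1 : R) * Uᵀ := by
  rw [orthogonalConjBasis, Module.Basis.map_apply, orthogonalConj_apply, stdBasis_eq_single]

theorem orthogonalConjBasis_mul_conj_diagonal (hU : Uᵀ * U = 1) (hV : Vᵀ * V = 1) (q : n × m)
    (f : m → R) :
    orthogonalConjBasis hU hV q * (U * diagonal f * Uᵀ) = f q.2 • orthogonalConjBasis hU hV q := by
  simp only [orthogonalConjBasis_apply, Matrix.mul_assoc]
  rw [← Matrix.mul_assoc Uᵀ U, hU, Matrix.one_mul, ← Matrix.mul_assoc (single _ _ _),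
    single_mul_diagonal, Matrix.smul_mul, Matrix.mul_smul]

theorem conj_diagonal_mul_orthogonalConjBasis (hU : Uᵀ * U = 1) (hV : Vᵀ * V = 1) (q : n × m)
    (f : n → R) :
    V * diagonal f * Vᵀ * orthogonalConjBasis hU hV q = f q.1 • orthogonalConjBasis hU hV q := by
  simp only [orthogonalConjBasis_apply, Matrix.mul_assoc]
  rw [← Matrix.mul_assoc Vᵀ V, hV, Matrix.one_mul, ← Matrix.mul_assoc (diagonal f),
    diagonal_mul_single, Matrix.smul_mul, Matrix.mul_smul]

end OrthogonalConj

theorem mul_sum_smul_sub_sum_smul_mul {R m n ι : Type*} [CommRing R] [Fintype m] [Fintype n]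
    [Fintype ι] {X : Matrix n m R} {A : ι → Matrix m m R} {B : ι → Matrix n n R} {a b : ι → R}
    (hA : ∀ p, X * A p = a p • X) (hB : ∀ p, B p * X = b p • X) (μ : ι → R) :
    X * (∑ p, μ p • A p) - (∑ p, μ p • B p) * X = (∑ p, μ p * (a p - b p)) • X := by
  simp only [Matrix.mul_sum, Matrix.sum_mul, Matrix.mul_smul, Matrix.smul_mul, hA, hB, smul_smul,
    ← Finset.sum_sub_distrib, ← sub_smul, Finset.sum_smul, mul_sub]

end Matrix

theorem LinearMap.apply_eq_inv_smul_of_apply_smul_eq {K M : Type*} [Field K] [AddCommGroup M]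
    [Module K M] (S : M →ₗ[K] M) {x : M} {c : K} (hx : x ≠ 0) (h : S (c • x) = x) :
    S x = c⁻¹ • x := by
  have hc : c ≠ 0 := by
    rintro rfl
    rw [zero_smul, map_zero] at h
    exact hx h.symm
  calc S x = c⁻¹ • S (c • x) := by rw [map_smul, smul_smul, inv_mul_cancel₀ hc, one_smul]
    _ = c⁻¹ • x := by rw [h]

theorem Module.End.spectrum_eq_range_of_basis {K M ι : Type*} [Field K] [AddCommGroup M]
    [Module K M] [Fintype ι] [DecidableEq ι] (f : Module.End K M) (b : Module.Basis ι K M)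
    (r : ι → K) (h : ∀ i, f (b i) = r i • b i) : spectrum K f = Set.range r := by
  have hdiag : LinearMap.toMatrix b b f = diagonal r := by
    ext i j
    rw [LinearMap.toMatrix_apply, h, map_smul, b.repr_self, Finsupp.smul_apply,
      Finsupp.single_apply, diagonal_apply, smul_eq_mul]
    split_ifs <;> simp_all [eq_comm]
  rw [← LinearMap.spectrum_toMatrix f b, hdiag, spectrum_diagonal]

theorem stmt9_general (k l d : ℕ)
    (A₁ : Fin d → Matrix (Fin k) (Fin k) ℝ) (A₂ : Fin d → Matrix (Fin l) (Fin l) ℝ)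
    (Λ : Fin k → Fin d → ℝ) (Λ' : Fin l → Fin d → ℝ)
    (U : Matrix (Fin k) (Fin k) ℝ) (V : Matrix (Fin l) (Fin l) ℝ)
    (hU : Uᵀ * U = 1) (hV : Vᵀ * V = 1)
    (hA₁ : ∀ p, A₁ p = U * diagonal (fun i => Λ i p) * Uᵀ)
    (hA₂ : ∀ p, A₂ p = V * diagonal (fun j => Λ' j p) * Vᵀ)
    (μ : Fin d → ℝ)
    (S : Matrix (Fin l) (Fin k) ℝ →ₗ[ℝ] Matrix (Fin l) (Fin k) ℝ)
    (hS1 : ∀ X, S (X * (∑ p, μ p • A₁ p) - (∑ p, μ p • A₂ p) * X) = X)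
    (k₀ : Fin d)
    (L : Module.End ℝ (Matrix (Fin l) (Fin k) ℝ))
    (hL : ∀ X, L X = (S X) * A₁ k₀ - A₂ k₀ * (S X)) :
    spectrum ℝ L
      = {r | ∃ i j, r = (Λ i k₀ - Λ' j k₀) / ∑ p, μ p * (Λ i p - Λ' j p)} := by
  set b := orthogonalConjBasis hU hV
  have hA₁b (q : Fin l × Fin k) (p : Fin d) : b q * A₁ p = Λ q.2 p • b q := by
    rw [hA₁, orthogonalConjBasis_mul_conj_diagonal]
  have hA₂b (q : Fin l × Fin k) (p : Fin d) : A₂ p * b q = Λ' q.1 p • b q := by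
    rw [hA₂, conj_diagonal_mul_orthogonalConjBasis]
  have hSb (q : Fin l × Fin k) : S (b q) = (∑ p, μ p * (Λ q.2 p - Λ' q.1 p))⁻¹ • b q :=
    S.apply_eq_inv_smul_of_apply_smul_eq (b.ne_zero q) <| by
      rw [← mul_sum_smul_sub_sum_smul_mul (hA₁b q) (hA₂b q), hS1]
  have hLb (q : Fin l × Fin k) :
      L (b q) = ((Λ q.2 k₀ - Λ' q.1 k₀) / ∑ p, μ p * (Λ q.2 p - Λ' q.1 p)) • b q := by
    rw [hL, hSb, Matrix.smul_mul, Matrix.mul_smul, hA₁b, hA₂b, smul_smul, smul_smul, ← sub_smul,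
      ← mul_sub, div_eq_inv_mul]
  rw [L.spectrum_eq_range_of_basis b _ hLb]
  ext r
  simp only [Set.mem_range, Prod.exists, Set.mem_ofPred_eq, eq_comm (a := r)]
  exact exists_comm

/-- Eigenvalues of the composed Sylvester-type operator `X ↦ T⁽ᵏ⁾(T(μ)⁻¹ X)`: given two
commuting symmetric families, simultaneously diagonalized with eigenvalue vectors `Λ i`
(first block) and `Λ' j` (second block), the spectrum of the composition is exactly
`{(Λ i k₀ - Λ' j k₀) / ⟨Λ i - Λ' j, μ⟩}`. -/
theorem stmt9 (k l d : ℕ)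
    (A₁ : Fin d → Matrix (Fin k) (Fin k) ℝ) (A₂ : Fin d → Matrix (Fin l) (Fin l) ℝ)
    (Λ : Fin k → Fin d → ℝ) (Λ' : Fin l → Fin d → ℝ)
    (U : Matrix (Fin k) (Fin k) ℝ) (V : Matrix (Fin l) (Fin l) ℝ)
    (hU : Uᵀ * U = 1) (hV : Vᵀ * V = 1)
    (hA₁ : ∀ p, A₁ p = U * diagonal (fun i => Λ i p) * Uᵀ)
    (hA₂ : ∀ p, A₂ p = V * diagonal (fun j => Λ' j p) * Vᵀ)
    (μ : Fin d → ℝ) (hsep : ∀ i j, ∑ p, μ p * (Λ i p - Λ' j p) ≠ 0)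
    (S : Matrix (Fin l) (Fin k) ℝ →ₗ[ℝ] Matrix (Fin l) (Fin k) ℝ)
    (hS1 : ∀ X, S (X * (∑ p, μ p • A₁ p) - (∑ p, μ p • A₂ p) * X) = X)
    (hS2 : ∀ X, (S X) * (∑ p, μ p • A₁ p) - (∑ p, μ p • A₂ p) * (S X) = X)
    (k₀ : Fin d)
    (L : Module.End ℝ (Matrix (Fin l) (Fin k) ℝ))
    (hL : ∀ X, L X = (S X) * A₁ k₀ - A₂ k₀ * (S X)) :
    spectrum ℝ L
      = {r | ∃ i j, r = (Λ i k₀ - Λ' j k₀) / ∑ p, μ p * (Λ i p - Λ' j p)} :=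
  stmt9_general k l d A₁ A₂ Λ Λ' U V hU hV hA₁ hA₂ μ S hS1 k₀ L hL
end

section
/- Let x be a unit vector in ℝ^n, A a real symmetric n×n matrix, and Q an orthogonal matrix whose i-th column is x. Then the Euclidean norm of the i-th column of offdiag(Q^T A Q) equals ‖(A − (x^T A x) I) x‖₂. -/
/-!
Write `y = A x`. Since the `i`-th column of `Q` is `x`, the `i`-th column of `Qᵀ A Q` is `Qᵀ y`,
whose `i`-th entry is `xᵀ A x = λ`. Orthogonality of `Q` gives `‖Qᵀ y‖² = ‖y‖²`, so removing
the diagonal entry leaves `‖y‖² - λ²`, which is also `‖y - λ x‖²` because `‖x‖ = 1`.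
-/

open Matrix

section

variable {R n : Type*} [CommRing R] [Fintype n]

theorem sum_sq_eq_dotProduct_self (v : n → R) : ∑ j, v j ^ 2 = v ⬝ᵥ v := by
  simp only [dotProduct, sq]

theorem sum_sq_ite_eq_sub [DecidableEq n] (v : n → R) (i : n) :
    ∑ j, (if j = i then 0 else v j) ^ 2 = ∑ j, v j ^ 2 - v i ^ 2 := by
  simp [ite_pow, Finset.sum_ite, Finset.filter_ne', Finset.sum_erase_eq_sub]

theorem transpose_mulVec_dotProduct_self [DecidableEq n] {Q : Matrix n n R} (hQ : Q * Qᵀ = 1)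
    (v : n → R) : (Qᵀ *ᵥ v) ⬝ᵥ (Qᵀ *ᵥ v) = v ⬝ᵥ v := by
  rw [dotProduct_mulVec, vecMul_transpose, mulVec_mulVec, hQ, one_mulVec]

theorem sub_dotProduct_smul_dotProduct_self {x : n → R} (hx : x ⬝ᵥ x = 1) (y : n → R) :
    (y - (x ⬝ᵥ y) • x) ⬝ᵥ (y - (x ⬝ᵥ y) • x) = y ⬝ᵥ y - (x ⬝ᵥ y) ^ 2 := by
  simp only [sub_dotProduct, dotProduct_sub, smul_dotProduct, dotProduct_smul, hx,
    dotProduct_comm y x, smul_eq_mul]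
  ring

end

theorem stmt18_general (n : ℕ) (x : Fin n → ℝ) (hx : ∑ j, x j ^ 2 = 1)
    (A : Matrix (Fin n) (Fin n) ℝ)
    (Q : Matrix (Fin n) (Fin n) ℝ) (hQ : Qᵀ * Q = 1) (i : Fin n)
    (hQi : (fun j => Q j i) = x) :
    Real.sqrt (∑ j, (if j = i then 0 else (Qᵀ * A * Q) j i) ^ 2)
      = Real.sqrt (∑ j, ((A *ᵥ x) j - (x ⬝ᵥ (A *ᵥ x)) * x j) ^ 2) := by
  set y := A *ᵥ x
  have hcol : ∀ j, (Qᵀ * A * Q) j i = (Qᵀ *ᵥ y) j := fun j => by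
    rw [mulVec_mulVec, ← hQi]; rfl
  have hdiag : (Qᵀ *ᵥ y) i = x ⬝ᵥ y := by
    rw [← hQi]; rfl
  have hQQ : Q * Qᵀ = 1 := mul_eq_one_comm.mp hQ
  rw [sum_sq_eq_dotProduct_self] at hx
  congr 1
  calc ∑ j, (if j = i then 0 else (Qᵀ * A * Q) j i) ^ 2
      = (Qᵀ *ᵥ y) ⬝ᵥ (Qᵀ *ᵥ y) - (x ⬝ᵥ y) ^ 2 := by
        simp only [hcol, sum_sq_ite_eq_sub, hdiag, sum_sq_eq_dotProduct_self]
    _ = (y - (x ⬝ᵥ y) • x) ⬝ᵥ (y - (x ⬝ᵥ y) • x) := by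
        rw [transpose_mulVec_dotProduct_self hQQ, sub_dotProduct_smul_dotProduct_self hx]
    _ = ∑ j, (y j - (x ⬝ᵥ y) * x j) ^ 2 := (sum_sq_eq_dotProduct_self _).symm

/-- If the `i`-th column of the orthogonal matrix `Q` is the unit vector `x`, then the
Euclidean norm of the `i`-th column of `offdiag(Qᵀ A Q)` equals the residual norm
`‖(A - (xᵀ A x) I) x‖₂`. -/
theorem stmt18 (n : ℕ) (x : Fin n → ℝ) (hx : ∑ j, x j ^ 2 = 1)
    (A : Matrix (Fin n) (Fin n) ℝ) (hA : A.IsSymm)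
    (Q : Matrix (Fin n) (Fin n) ℝ) (hQ : Qᵀ * Q = 1) (i : Fin n)
    (hQi : (fun j => Q j i) = x) :
    Real.sqrt (∑ j, (if j = i then 0 else (Qᵀ * A * Q) j i) ^ 2)
      = Real.sqrt (∑ j, ((A *ᵥ x) j - (x ⬝ᵥ (A *ᵥ x)) * x j) ^ 2) :=
  stmt18_general n x hx A Q hQ i hQi
end
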